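/- arXiv:1205.3086 — 8 statements merged into one kernel-verified Lean document; each statement's English description precedes it below -/
import Mathlib

section
/- Let d be a positive divisor of N with gcd(d, N/d) = 1. For every s ∈ P_d ∩ S₀(n,N)^±, one has ψ_d¹(s) ≡ s₁₁ (mod d) and (ψ_d²(s))₁₁ ≡ s₁₁ (mod N/d), where s₁₁ is the (1,1) entry of s and (ψ_d²(s))₁₁ is the (1,1) entry of the (n−1)×(n−1) matrix ψ_d²(s). -/
/-! With indices from `0`: reading the `(0,1)` entry of `g_d s g_d⁻¹ ∈ P_d` gives
`s₀₁ = d (s₀₀ - (ψ_d² s)₀₀)`, and `N ∣ s₀₁` with `N = d · (N/d)` then yields the congruence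
mod `N/d`; the congruence mod `d` is `ψ_d¹(s) = s₀₀ + d s₁₀`. -/

open Matrix

/-- `g_x` over `ℤ`: the identity matrix with its `(1,2)` entry replaced by `x`. -/
def gmatZ (n : ℕ) (x : ℤ) : Matrix (Fin (n + 2)) (Fin (n + 2)) ℤ :=
  1 + x • Matrix.single 0 1 1

/-- Conjugation `g_d s g_d⁻¹` (note `g_d⁻¹ = g_{-d}`). -/
def conjd (n : ℕ) (d : ℤ) (s : Matrix (Fin (n + 2)) (Fin (n + 2)) ℤ) :
    Matrix (Fin (n + 2)) (Fin (n + 2)) ℤ :=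
  gmatZ n d * s * gmatZ n (-d)

/-- `S₀(m+1,N)^±`: integer matrices with nonzero determinant relatively prime to `pN`
whose first row is `≡ (∗,0,…,0) (mod N)`. -/
def S0pm (p N : ℕ) {m : ℕ} : Set (Matrix (Fin (m + 1)) (Fin (m + 1)) ℤ) :=
  {s | s.det ≠ 0 ∧ Int.gcd s.det (p * N) = 1 ∧ ∀ j : Fin (m + 1), j ≠ 0 → (N : ℤ) ∣ s 0 j}

/-- `ψ_d¹(s)`: the `(1,1)` entry of `g_d s g_d⁻¹`. -/
def psi1 (n : ℕ) (d : ℤ) (s : Matrix (Fin (n + 2)) (Fin (n + 2)) ℤ) : ℤ :=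
  conjd n d s 0 0

/-- `ψ_d²(s)`: the lower-right `(n-1)×(n-1)` block of `g_d s g_d⁻¹`. -/
def psi2 (n : ℕ) (d : ℤ) (s : Matrix (Fin (n + 2)) (Fin (n + 2)) ℤ) :
    Matrix (Fin (n + 1)) (Fin (n + 1)) ℤ :=
  Matrix.of fun i j => conjd n d s i.succ j.succ

section Conjugation

variable (n : ℕ) (d : ℤ) (s : Matrix (Fin (n + 2)) (Fin (n + 2)) ℤ)

lemma conjd_eq :
    conjd n d s = s + d • (single 0 1 1 * s) + (-d) • (s * single 0 1 1)
      + (d * (-d)) • (single 0 1 1 * s * single 0 1 1) := by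
  simp only [conjd, gmatZ, Matrix.add_mul, Matrix.mul_add, Matrix.mul_one, Matrix.one_mul,
    Matrix.smul_mul, Matrix.mul_smul]
  module

lemma conjd_apply_zero_zero : conjd n d s 0 0 = s 0 0 + d * s 1 0 := by
  simp only [conjd_eq, Matrix.add_apply, Matrix.smul_apply]
  simp

lemma conjd_apply_one_one : conjd n d s 1 1 = s 1 1 - d * s 1 0 := by
  simp only [conjd_eq, Matrix.add_apply, Matrix.smul_apply]
  simp only [ne_eq, one_ne_zero, not_false_eq_true, single_mul_apply_of_ne, Int.zsmul_eq_mul,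
    mul_zero, add_zero, mul_single_apply_same, mul_one, neg_mul, mul_neg]
  ring

lemma conjd_apply_zero_one : conjd n d s 0 1 = s 0 1 - d * (s 0 0 - conjd n d s 1 1) := by
  rw [conjd_apply_one_one]
  simp only [conjd_eq, Matrix.add_apply, Matrix.smul_apply]
  simp only [single_mul_apply_same, one_mul, Int.zsmul_eq_mul, mul_single_apply_same, mul_one,
    neg_mul, mul_neg]
  ring

lemma psi1_eq : psi1 n d s = s 0 0 + d * s 1 0 :=
  conjd_apply_zero_zero n d s

lemma psi2_apply_zero_zero : psi2 n d s 0 0 = conjd n d s 1 1 := by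
  simp [psi2, Fin.succ_zero_eq_one]

end Conjugation

theorem stmt1_general (p : ℕ) (n N d : ℕ) (hd : 0 < d) (hdvd : d ∣ N)
    (s : Matrix (Fin (n + 2)) (Fin (n + 2)) ℤ)
    (hs : s ∈ S0pm p N)
    (hsPd : ∀ j : Fin (n + 2), j ≠ 0 → conjd n (d : ℤ) s 0 j = 0) :
    (d : ℤ) ∣ psi1 n (d : ℤ) s - s 0 0 ∧
    ((N / d : ℕ) : ℤ) ∣ psi2 n (d : ℤ) s 0 0 - s 0 0 := by
  refine ⟨⟨s 1 0, by rw [psi1_eq]; ring⟩, ?_⟩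
  have hrow : s 0 1 = d * (s 0 0 - conjd n d s 1 1) := by
    have h := conjd_apply_zero_one n d s
    rw [hsPd 1 one_ne_zero] at h
    linarith
  have hN : (N : ℤ) ∣ d * (s 0 0 - conjd n d s 1 1) := hrow ▸ hs.2.2 1 one_ne_zero
  rw [psi2_apply_zero_zero, dvd_sub_comm, Int.natCast_div,
    Int.div_dvd_iff_dvd_mul (Int.natCast_dvd_natCast.mpr hdvd) (by exact_mod_cast hd.ne')]
  exact hN

/-- for `s ∈ P_d ∩ S₀(n,N)^±` one has `ψ_d¹(s) ≡ s₁₁ (mod d)` and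
`(ψ_d²(s))₁₁ ≡ s₁₁ (mod N/d)`. -/
theorem stmt1 (p : ℕ) (hp : p.Prime) (n N d : ℕ) (hN : 0 < N) (hd : 0 < d) (hdvd : d ∣ N)
    (hgcd : Nat.gcd d (N / d) = 1) (s : Matrix (Fin (n + 2)) (Fin (n + 2)) ℤ)
    (hs : s ∈ S0pm p N)
    (hsPd : ∀ j : Fin (n + 2), j ≠ 0 → conjd n (d : ℤ) s 0 j = 0) :
    (d : ℤ) ∣ psi1 n (d : ℤ) s - s 0 0 ∧
    ((N / d : ℕ) : ℤ) ∣ psi2 n (d : ℤ) s 0 0 - s 0 0 :=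
  stmt1_general p n N d hd hdvd s hs hsPd
end

section
/- Let d be a positive divisor of N with gcd(d, N/d) = 1. Then ψ_d² maps P_d ∩ S₀(n,N)^± into S₀(n−1, N/d)^±; that is, for every s ∈ P_d ∩ S₀(n,N)^±, the (n−1)×(n−1) integer matrix ψ_d²(s) has determinant relatively prime to p·(N/d) and first row congruent to (∗,0,…,0) modulo N/d. -/
open Matrix

theorem Matrix.det_eq_mul_det_submatrix_succ_of_row_zero {R : Type*} [CommRing R] {m : ℕ}
    (A : Matrix (Fin (m + 1)) (Fin (m + 1)) R) (hA : ∀ j, j ≠ 0 → A 0 j = 0) :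
    A.det = A 0 0 * (A.submatrix Fin.succ Fin.succ).det := by
  rw [det_succ_row_zero, Finset.sum_eq_single 0 (fun j _ hj => by rw [hA j hj, mul_zero, zero_mul])
    (fun h => absurd (Finset.mem_univ 0) h)]
  simp

theorem gmatZ_mul_neg (n : ℕ) (x : ℤ) : gmatZ n x * gmatZ n (-x) = 1 := by
  have hsq : (single 0 1 (1 : ℤ) : Matrix (Fin (n + 2)) (Fin (n + 2)) ℤ) * single 0 1 1 = 0 :=
    single_mul_single_of_ne (h := show (1 : Fin (n + 2)) ≠ 0 by simp) ..
  simp only [gmatZ, add_mul, mul_add, Matrix.smul_mul, Matrix.mul_smul, one_mul, mul_one, hsq,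
    smul_zero]
  module

theorem det_conjd (n : ℕ) (x : ℤ) (s : Matrix (Fin (n + 2)) (Fin (n + 2)) ℤ) :
    (conjd n x s).det = s.det := by
  have hinv : (gmatZ n x).det * (gmatZ n (-x)).det = 1 := by
    rw [← det_mul, gmatZ_mul_neg, det_one]
  calc (conjd n x s).det = (gmatZ n x).det * (gmatZ n (-x)).det * s.det := by
        rw [conjd, det_mul, det_mul]; ring
    _ = s.det := by rw [hinv, one_mul]

theorem conjd_apply_of_ne_one (n : ℕ) (x : ℤ) (s : Matrix (Fin (n + 2)) (Fin (n + 2)) ℤ)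
    (i : Fin (n + 2)) {j : Fin (n + 2)} (hj : j ≠ 1) :
    conjd n x s i j = s i j + if i = 0 then x * s 1 j else 0 := by
  have hj' : (1 : Fin (n + 2)) ≠ j := hj.symm
  by_cases hi : i = 0
  · subst hi
    simp [conjd, gmatZ, add_mul, mul_apply, single, one_apply, hj']
  · simp [conjd, gmatZ, add_mul, mul_apply, single, one_apply, hj', hi, Ne.symm hi]

section PsiTwo

variable (n : ℕ) (d : ℤ) (s : Matrix (Fin (n + 2)) (Fin (n + 2)) ℤ)

theorem det_eq_psi1_mul_det_psi2 (hs : ∀ j, j ≠ 0 → conjd n d s 0 j = 0) :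
    s.det = psi1 n d s * (psi2 n d s).det := by
  rw [← det_conjd n d, det_eq_mul_det_submatrix_succ_of_row_zero _ hs]
  rfl

theorem psi2_zero_apply {j : Fin (n + 1)} (hj : j ≠ 0) : psi2 n d s 0 j = s 1 j.succ := by
  have hj1 : j.succ ≠ 1 := fun h => hj (Fin.succ_injective _ h)
  simp [psi2, conjd_apply_of_ne_one n d s _ hj1]

theorem row_zero_add_mul_row_one_eq_zero (hs : ∀ j, j ≠ 0 → conjd n d s 0 j = 0)
    {j : Fin (n + 1)} (hj : j ≠ 0) : s 0 j.succ + d * s 1 j.succ = 0 := by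
  have hj1 : j.succ ≠ 1 := fun h => hj (Fin.succ_injective _ h)
  simpa [conjd_apply_of_ne_one n d s 0 hj1] using hs j.succ (Fin.succ_ne_zero j)

end PsiTwo

theorem Int.gcd_eq_one_of_dvd_of_dvd {a b c e : ℤ} (h : Int.gcd a c = 1) (hba : b ∣ a)
    (hec : e ∣ c) : Int.gcd b e = 1 :=
  Int.isCoprime_iff_gcd_eq_one.mp <|
    ((Int.isCoprime_iff_gcd_eq_one.mpr h).of_isCoprime_of_dvd_left hba).of_isCoprime_of_dvd_right
      hec

theorem stmt2_general (p : ℕ) (n N d : ℕ) (hd : 0 < d) (hdvd : d ∣ N)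
    (s : Matrix (Fin (n + 2)) (Fin (n + 2)) ℤ)
    (hs : s ∈ S0pm p N)
    (hsPd : ∀ j : Fin (n + 2), j ≠ 0 → conjd n (d : ℤ) s 0 j = 0) :
    psi2 n (d : ℤ) s ∈ S0pm p (N / d) := by
  obtain ⟨hdet, hcop, hrow⟩ := hs
  have hfac := det_eq_psi1_mul_det_psi2 n d s hsPd
  refine ⟨fun h => hdet (by rw [hfac, h, mul_zero]), ?_, fun j hj => ?_⟩
  · refine Int.gcd_eq_one_of_dvd_of_dvd hcop (Dvd.intro_left _ hfac.symm) ?_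
    exact_mod_cast mul_dvd_mul_left p (Nat.div_dvd_of_dvd hdvd)
  · have hN : (N : ℤ) = d * (N / d : ℕ) := by exact_mod_cast (Nat.mul_div_cancel' hdvd).symm
    have hdiv : (d : ℤ) * (N / d : ℕ) ∣ d * s 1 j.succ := by
      rw [← hN, eq_neg_of_add_eq_zero_right (row_zero_add_mul_row_one_eq_zero n d s hsPd hj)]
      exact (hrow j.succ (Fin.succ_ne_zero j)).neg_right
    rw [psi2_zero_apply n d s hj]
    exact (mul_dvd_mul_iff_left (by exact_mod_cast hd.ne')).mp hdiv

/-- `ψ_d²` maps `P_d ∩ S₀(n,N)^±` into `S₀(n-1, N/d)^±`. -/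
theorem stmt2 (p : ℕ) (hp : p.Prime) (n N d : ℕ) (hN : 0 < N) (hd : 0 < d) (hdvd : d ∣ N)
    (hgcd : Nat.gcd d (N / d) = 1) (s : Matrix (Fin (n + 2)) (Fin (n + 2)) ℤ)
    (hs : s ∈ S0pm p N)
    (hsPd : ∀ j : Fin (n + 2), j ≠ 0 → conjd n (d : ℤ) s 0 j = 0) :
    psi2 n (d : ℤ) s ∈ S0pm p (N / d) :=
  stmt2_general p n N d hd hdvd s hs hsPd
end

section
/- Let N ≥ 1 and let ℓ be a prime not dividing N. Set Γ = Γ₀(3,N) and s = diag(1,1,ℓ). Let C be the set of 3×3 integer matrices consisting of: [[1,0,0],[0,1,0],[b,c,ℓ]] for 0 ≤ b,c ≤ ℓ−1; [[1,0,0],[a,ℓ,0],[0,0,1]] for 0 ≤ a ≤ ℓ−1; and diag(ℓ,1,1). Then the double coset ΓsΓ = {γ₁ s γ₂ : γ₁, γ₂ ∈ Γ} equals the union ⋃_{g ∈ C} gΓ, and the left cosets gΓ for distinct g ∈ C are pairwise disjoint; in particular, ΓsΓ is the disjoint union of exactly ℓ² + ℓ + 1 left cosets of Γ. -/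
open Matrix

/-- `Γ₀(3,N)`: 3×3 integer matrices of determinant `1` whose first row is
`≡ (∗,0,0) (mod N)`. -/
def Gamma03 (N : ℕ) : Set (Matrix (Fin 3) (Fin 3) ℤ) :=
  {g | g.det = 1 ∧ (N : ℤ) ∣ g 0 1 ∧ (N : ℤ) ∣ g 0 2}

/-- The set `C` of coset representatives for `s = diag(1,1,ℓ)`. -/
def C4 (ℓ : ℕ) : Set (Matrix (Fin 3) (Fin 3) ℤ) :=
  {M | (∃ b c : ℤ, 0 ≤ b ∧ b ≤ (ℓ : ℤ) - 1 ∧ 0 ≤ c ∧ c ≤ (ℓ : ℤ) - 1 ∧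
          M = !![1, 0, 0; 0, 1, 0; b, c, (ℓ : ℤ)]) ∨
       (∃ a : ℤ, 0 ≤ a ∧ a ≤ (ℓ : ℤ) - 1 ∧ M = !![1, 0, 0; a, (ℓ : ℤ), 0; 0, 0, 1]) ∨
       M = !![(ℓ : ℤ), 0, 0; 0, 1, 0; 0, 0, 1]}

lemma Gamma03.mul_mem {N : ℕ} {g h : Matrix (Fin 3) (Fin 3) ℤ}
    (hg : g ∈ Gamma03 N) (hh : h ∈ Gamma03 N) : g * h ∈ Gamma03 N := by
  obtain ⟨hgd, hg1, hg2⟩ := hg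
  obtain ⟨hhd, hh1, hh2⟩ := hh
  refine ⟨by rw [Matrix.det_mul, hgd, hhd, one_mul], ?_, ?_⟩ <;>
  · simp only [Matrix.mul_apply, Fin.sum_univ_three]
    exact dvd_add (dvd_add (Dvd.dvd.mul_left (by assumption) _)
      (Dvd.dvd.mul_right (by assumption) _)) (Dvd.dvd.mul_right (by assumption) _)

lemma rows_indep {ℓ : ℕ} [Fact ℓ.Prime] {N : ℕ} {γ : Matrix (Fin 3) (Fin 3) ℤ}
    (hγ : γ ∈ Gamma03 N) (v : Fin 3 → ZMod ℓ)
    (hv : v ᵥ* γ.map (Int.cast : ℤ → ZMod ℓ) = 0) : v = 0 := by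
  by_contra h
  have hdet : (γ.map (Int.cast : ℤ → ZMod ℓ)).det = 0 :=
    Matrix.exists_vecMul_eq_zero_iff.mp ⟨v, h, hv⟩
  have h1 : (γ.map (Int.cast : ℤ → ZMod ℓ)).det = 1 := by
    have h2 := RingHom.map_det (Int.castRingHom (ZMod ℓ)) γ
    rw [hγ.1] at h2
    simpa [RingHom.mapMatrix_apply] using h2.symm
  rw [h1] at hdet
  exact one_ne_zero hdet

lemma int_bounded_eq {ℓ : ℕ} (hℓ : 0 < ℓ) {b b' : ℤ} (hd : (ℓ:ℤ) ∣ b - b')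
    (h1 : 0 ≤ b) (h2 : b ≤ (ℓ:ℤ) - 1) (h3 : 0 ≤ b') (h4 : b' ≤ (ℓ:ℤ) - 1) : b = b' := by
  obtain ⟨k, hk⟩ := hd
  have hl : (0:ℤ) < ℓ := by exact_mod_cast hℓ
  rcases lt_trichotomy k 0 with h | h | h
  · nlinarith
  · rw [h, mul_zero] at hk; omega
  · nlinarith

lemma exists_int_cast {ℓ : ℕ} [NeZero ℓ] (x : ZMod ℓ) :
    ∃ b : ℤ, 0 ≤ b ∧ b ≤ (ℓ:ℤ) - 1 ∧ ((b : ℤ) : ZMod ℓ) = x := by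
  refine ⟨(x.val : ℤ), Int.ofNat_nonneg _, ?_, ?_⟩
  · have := ZMod.val_lt x
    have : (x.val : ℤ) < (ℓ : ℤ) := by exact_mod_cast this
    omega
  · push_cast
    exact ZMod.natCast_rightInverse x


lemma repr4 {N ℓ : ℕ} (hℓ : ℓ.Prime) (hℓN : ¬ ℓ ∣ N) {g : Matrix (Fin 3) (Fin 3) ℤ}
    (hg : g ∈ C4 ℓ) :
    ∃ γ₁ ∈ Gamma03 N, ∃ γ₂ ∈ Gamma03 N,
      g = γ₁ * !![1, 0, 0; 0, 1, 0; 0, 0, (ℓ : ℤ)] * γ₂ := by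
  rcases hg with ⟨b, c, _, _, _, _, rfl⟩ | ⟨a, _, _, rfl⟩ | rfl
  · refine ⟨!![1,0,0;0,1,0;b,c,1], ⟨by simp [Matrix.det_fin_three], by simp, by simp⟩,
      1, ⟨by simp, by simp, by simp⟩, ?_⟩
    rw [Matrix.mul_fin_three, Matrix.mul_one]
    norm_num
  · refine ⟨!![1,0,0;a,0,-1;0,1,0], ⟨by simp [Matrix.det_fin_three], by simp, by simp⟩,
      !![1,0,0;0,0,1;0,-1,0], ⟨by simp [Matrix.det_fin_three], by simp, by simp⟩, ?_⟩
    rw [Matrix.mul_fin_three, Matrix.mul_fin_three]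
    norm_num
  · have hcop : IsCoprime (ℓ:ℤ) (N:ℤ) := by
      rw [Int.isCoprime_iff_gcd_eq_one]
      exact Nat.Coprime.gcd_eq_one ((Nat.Prime.coprime_iff_not_dvd hℓ).mpr hℓN)
    obtain ⟨u, v, huv⟩ := hcop
    -- u*ℓ + v*N = 1 ; take d := u, then N ∣ ℓ*d - 1
    refine ⟨!![(ℓ:ℤ),0,(ℓ:ℤ)*u-1;0,1,0;1,0,u],
      ⟨by simp [Matrix.det_fin_three]; try ring, by simp, ⟨-v, by simp; linarith⟩⟩,
      !![u*(ℓ:ℤ),0,1-(ℓ:ℤ)*u;0,1,0;-1,0,1],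
      ⟨by simp [Matrix.det_fin_three]; try ring, by simp, ⟨v, by simp; linarith⟩⟩, ?_⟩
    rw [Matrix.mul_fin_three, Matrix.mul_fin_three]
    ext i j
    fin_cases i <;> fin_cases j <;> simp [Matrix.vecHead, Matrix.vecTail] <;> ring

lemma key_decomp {N ℓ : ℕ} (hℓ : ℓ.Prime) (hℓN : ¬ ℓ ∣ N)
    {m : Matrix (Fin 3) (Fin 3) ℤ} (hdet : m.det = (ℓ:ℤ))
    (h1 : (N:ℤ) ∣ m 0 1) (h2 : (N:ℤ) ∣ m 0 2) :
    ∃ g ∈ C4 ℓ, ∃ γ ∈ Gamma03 N, m = g * γ := by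
  haveI : Fact ℓ.Prime := ⟨hℓ⟩
  have hℓ0 : (ℓ:ℤ) ≠ 0 := by exact_mod_cast hℓ.pos.ne'
  have hℓpos : (0:ℤ) < (ℓ:ℤ) := by exact_mod_cast hℓ.pos
  by_cases hA : ∀ j, (ℓ:ℤ) ∣ m 0 j
  · -- g = diag(ℓ,1,1)
    set γ : Matrix (Fin 3) (Fin 3) ℤ :=
      !![m 0 0 / ℓ, m 0 1 / ℓ, m 0 2 / ℓ; m 1 0, m 1 1, m 1 2; m 2 0, m 2 1, m 2 2] with hγ
    have hm : m = !![(ℓ:ℤ),0,0;0,1,0;0,0,1] * γ := by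
      rw [hγ, Matrix.mul_fin_three]
      ext i j
      fin_cases i <;> fin_cases j <;>
        simp [Matrix.vecHead, Matrix.vecTail, Int.mul_ediv_cancel' (hA _)]
    have hcop : IsCoprime ((N:ℤ)) ((ℓ:ℤ)) := by
      rw [Int.isCoprime_iff_gcd_eq_one, Int.gcd_natCast_natCast]
      exact (Nat.coprime_comm.mp ((Nat.Prime.coprime_iff_not_dvd hℓ).mpr hℓN))
    have hdg : (!![(ℓ:ℤ),0,0;0,1,0;0,0,1]).det = (ℓ:ℤ) := by simp [Matrix.det_fin_three]
    have hdγ : γ.det = 1 := by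
      apply mul_left_cancel₀ hℓ0
      rw [mul_one, ← hdg, ← Matrix.det_mul, ← hm, hdet, hdg]
    refine ⟨_, Or.inr (Or.inr rfl), γ, ⟨hdγ, ?_, ?_⟩, hm⟩
    · show (N:ℤ) ∣ m 0 1 / ℓ
      obtain ⟨k, hk⟩ := hA 1
      rw [hk, Int.mul_ediv_cancel_left _ hℓ0]
      exact hcop.dvd_of_dvd_mul_left (hk ▸ h1)
    · show (N:ℤ) ∣ m 0 2 / ℓ
      obtain ⟨k, hk⟩ := hA 2
      rw [hk, Int.mul_ediv_cancel_left _ hℓ0]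
      exact hcop.dvd_of_dvd_mul_left (hk ▸ h2)
  · by_cases hB : ∃ a : ℤ, ∀ j, (ℓ:ℤ) ∣ m 1 j - a * m 0 j
    · obtain ⟨a, ha⟩ := hB
      set a' : ℤ := a % ℓ with ha'
      have hB' : ∀ j, (ℓ:ℤ) ∣ m 1 j - a' * m 0 j := by
        intro j
        have heq : m 1 j - a' * m 0 j = (m 1 j - a * m 0 j) + ((ℓ:ℤ) * (a / ℓ)) * m 0 j := by
          rw [ha', Int.emod_def]; ring
        rw [heq]
        exact dvd_add (ha j) (Dvd.dvd.mul_right (Dvd.intro _ rfl) _)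
      set γ : Matrix (Fin 3) (Fin 3) ℤ :=
        !![m 0 0, m 0 1, m 0 2;
           (m 1 0 - a' * m 0 0)/ℓ, (m 1 1 - a' * m 0 1)/ℓ, (m 1 2 - a' * m 0 2)/ℓ;
           m 2 0, m 2 1, m 2 2] with hγ
      have hm : m = !![1,0,0;a',(ℓ:ℤ),0;0,0,1] * γ := by
        rw [hγ, Matrix.mul_fin_three]
        ext i j
        fin_cases i <;> fin_cases j <;>
          simp [Matrix.vecHead, Matrix.vecTail, Int.mul_ediv_cancel' (hB' _)] <;> ring
      have hdg : (!![1,0,0;a',(ℓ:ℤ),0;0,0,1]).det = (ℓ:ℤ) := by simp [Matrix.det_fin_three]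
      have hdγ : γ.det = 1 := by
        apply mul_left_cancel₀ hℓ0
        rw [mul_one, ← hdg, ← Matrix.det_mul, ← hm, hdet, hdg]
      exact ⟨_, Or.inr (Or.inl ⟨a', Int.emod_nonneg a hℓ0, by
        have := Int.emod_lt_of_pos a hℓpos; omega, rfl⟩), γ,
        ⟨hdγ, by simpa [hγ] using h1, by simpa [hγ] using h2⟩, hm⟩
    · -- case C
      set R := ZMod ℓ
      have hdet' : (m.map (Int.cast : ℤ → R)).det = 0 := by
        have hh := RingHom.map_det (Int.castRingHom R) m
        rw [hdet, RingHom.mapMatrix_apply, Int.coe_castRingHom] at hh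
        rw [← hh]; push_cast; simp [ZMod.natCast_self]
      obtain ⟨v, hv0, hv⟩ := Matrix.exists_vecMul_eq_zero_iff.mpr hdet'
      have hvj : ∀ j, v 0 * ((m 0 j : ℤ) : R) + v 1 * ((m 1 j : ℤ) : R)
          + v 2 * ((m 2 j : ℤ) : R) = 0 := by
        intro j
        have := congrFun hv j
        simpa [Matrix.vecMul, dotProduct, Fin.sum_univ_three, Matrix.map_apply] using this
      have hv2 : v 2 ≠ 0 := by
        intro h22
        by_cases h11 : v 1 = 0
        · have hv00 : v 0 ≠ 0 := by
            intro h00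
            apply hv0
            funext i
            fin_cases i <;> simpa
          apply hA
          intro j
          have hj := hvj j
          rw [h11, h22] at hj
          simp at hj
          rw [← ZMod.intCast_zmod_eq_zero_iff_dvd]
          rcases hj with hj | hj
          · exact absurd hj hv00
          · exact hj
        · apply hB
          obtain ⟨a, _, _, hac⟩ := exists_int_cast (- v 0 / v 1 : R)
          refine ⟨a, fun j => ?_⟩
          rw [← ZMod.intCast_zmod_eq_zero_iff_dvd]
          push_cast
          rw [hac]
          have hj := hvj j
          rw [h22] at hj
          simp at hj
          field_simp
          linear_combination hj
      obtain ⟨b, hb0, hb1, hbc⟩ := exists_int_cast (- v 0 / v 2 : R)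
      obtain ⟨c, hc0, hc1, hcc⟩ := exists_int_cast (- v 1 / v 2 : R)
      have hdvd : ∀ j, (ℓ:ℤ) ∣ m 2 j - b * m 0 j - c * m 1 j := by
        intro j
        rw [← ZMod.intCast_zmod_eq_zero_iff_dvd]
        push_cast
        rw [hbc, hcc]
        have hj := hvj j
        field_simp
        linear_combination hj
      set γ : Matrix (Fin 3) (Fin 3) ℤ :=
        !![m 0 0, m 0 1, m 0 2; m 1 0, m 1 1, m 1 2;
           (m 2 0 - b * m 0 0 - c * m 1 0)/ℓ, (m 2 1 - b * m 0 1 - c * m 1 1)/ℓ,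
           (m 2 2 - b * m 0 2 - c * m 1 2)/ℓ] with hγ
      have hm : m = !![1,0,0;0,1,0;b,c,(ℓ:ℤ)] * γ := by
        rw [hγ, Matrix.mul_fin_three]
        ext i j
        fin_cases i <;> fin_cases j <;>
          simp [Matrix.vecHead, Matrix.vecTail, Int.mul_ediv_cancel' (hdvd _)] <;> ring
      have hdg : (!![1,0,0;0,1,0;b,c,(ℓ:ℤ)]).det = (ℓ:ℤ) := by simp [Matrix.det_fin_three]
      have hdγ : γ.det = 1 := by
        apply mul_left_cancel₀ hℓ0
        rw [mul_one, ← hdg, ← Matrix.det_mul, ← hm, hdet, hdg]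
      exact ⟨_, Or.inl ⟨b, c, hb0, hb1, hc0, hc1, rfl⟩, γ,
        ⟨hdγ, by simpa [hγ] using h1, by simpa [hγ] using h2⟩, hm⟩

set_option maxHeartbeats 1000000 in
lemma coset_eq {N ℓ : ℕ} (hℓ : ℓ.Prime) {g g' γ γ' : Matrix (Fin 3) (Fin 3) ℤ}
    (hg : g ∈ C4 ℓ) (hg' : g' ∈ C4 ℓ) (hγ : γ ∈ Gamma03 N) (hγ' : γ' ∈ Gamma03 N)
    (heq : g * γ = g' * γ') : g = g' := by
  haveI : Fact ℓ.Prime := ⟨hℓ⟩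
  rcases hg with ⟨b, c, hb0, hb1, hc0, hc1, rfl⟩ | ⟨a, ha0, ha1, rfl⟩ | rfl <;>
    rcases hg' with ⟨b', c', hb0', hb1', hc0', hc1', rfl⟩ | ⟨a', ha0', ha1', rfl⟩ | rfl
  -- (1,1)
  · have e0 : ∀ j, γ 0 j = γ' 0 j := fun j => by
      have h := congrFun (congrFun heq 0) j
      simp [Matrix.mul_apply, Fin.sum_univ_three] at h; linear_combination h
    have e1 : ∀ j, γ 1 j = γ' 1 j := fun j => by
      have h := congrFun (congrFun heq 1) j
      simp [Matrix.mul_apply, Fin.sum_univ_three] at h; linear_combination h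
    have e2 : ∀ j, b * γ 0 j + c * γ 1 j + (ℓ:ℤ) * γ 2 j = b' * γ' 0 j + c' * γ' 1 j + (ℓ:ℤ) * γ' 2 j := fun j => by
      have h := congrFun (congrFun heq 2) j
      simp [Matrix.mul_apply, Fin.sum_univ_three] at h; linear_combination h
    have hv := rows_indep hγ ![((b:ℤ) : ZMod ℓ) - ((b':ℤ) : ZMod ℓ), ((c:ℤ) : ZMod ℓ) - ((c':ℤ) : ZMod ℓ), 0]
      (funext fun j => by
        simp only [Matrix.vecMul, dotProduct, Fin.sum_univ_three, Matrix.map_apply,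
          Matrix.cons_val_zero, Matrix.cons_val_one, Matrix.head_cons, Pi.zero_apply,
          Matrix.cons_val_two, Matrix.tail_cons, Matrix.cons_val_fin_one, Matrix.cons_val', Matrix.empty_val']
        have hz : (b - b') * γ 0 j + (c - c') * γ 1 j = (ℓ:ℤ) * (γ' 2 j - γ 2 j) := by
          linear_combination (e2 j) - b' * (e0 j) - c' * (e1 j)
        have hq := congrArg (Int.cast : ℤ → ZMod ℓ) hz
        push_cast at hq ⊢
        rw [ZMod.natCast_self] at hq
        linear_combination hq)
    have hb := congrFun hv 0
    have hc := congrFun hv 1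
    simp [sub_eq_zero] at hb hc
    have hbb : b = b' := by
      refine int_bounded_eq hℓ.pos ?_ hb0 hb1 hb0' hb1'
      rw [← ZMod.intCast_zmod_eq_zero_iff_dvd]; push_cast; rw [sub_eq_zero]; exact_mod_cast hb
    have hcc : c = c' := by
      refine int_bounded_eq hℓ.pos ?_ hc0 hc1 hc0' hc1'
      rw [← ZMod.intCast_zmod_eq_zero_iff_dvd]; push_cast; rw [sub_eq_zero]; exact_mod_cast hc
    rw [hbb, hcc]
  -- (1,2)
  · exfalso
    have e0 : ∀ j, γ 0 j = γ' 0 j := fun j => by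
      have h := congrFun (congrFun heq 0) j
      simp [Matrix.mul_apply, Fin.sum_univ_three] at h; linear_combination h
    have e1 : ∀ j, γ 1 j = a' * γ' 0 j + (ℓ:ℤ) * γ' 1 j := fun j => by
      have h := congrFun (congrFun heq 1) j
      simp [Matrix.mul_apply, Fin.sum_univ_three] at h; linear_combination h
    have hv := rows_indep hγ ![((a':ℤ) : ZMod ℓ), -1, 0]
      (funext fun j => by
        simp only [Matrix.vecMul, dotProduct, Fin.sum_univ_three, Matrix.map_apply,
          Matrix.cons_val_zero, Matrix.cons_val_one, Matrix.head_cons, Pi.zero_apply,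
          Matrix.cons_val_two, Matrix.tail_cons, Matrix.cons_val_fin_one, Matrix.cons_val', Matrix.empty_val']
        have hz : a' * γ 0 j - γ 1 j = (ℓ:ℤ) * (- γ' 1 j) := by
          linear_combination a' * (e0 j) - e1 j
        have hq := congrArg (Int.cast : ℤ → ZMod ℓ) hz
        push_cast at hq ⊢
        rw [ZMod.natCast_self] at hq
        linear_combination hq)
    have h1 := congrFun hv 1
    simp at h1
  -- (1,3)
  · have e0 : ∀ j, γ 0 j = (ℓ:ℤ) * γ' 0 j := fun j => by
      have h := congrFun (congrFun heq 0) j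
      simp [Matrix.mul_apply, Fin.sum_univ_three] at h; linear_combination h
    exfalso
    have hv := rows_indep hγ ![1, 0, 0]
      (funext fun j => by
        simp only [Matrix.vecMul, dotProduct, Fin.sum_univ_three, Matrix.map_apply,
          Matrix.cons_val_zero, Matrix.cons_val_one, Matrix.head_cons, Pi.zero_apply,
          Matrix.cons_val_two, Matrix.tail_cons, Matrix.cons_val_fin_one, Matrix.cons_val', Matrix.empty_val']
        have hz : γ 0 j = (ℓ:ℤ) * (γ' 0 j) := by linear_combination (e0 j)
        have hq := congrArg (Int.cast : ℤ → ZMod ℓ) hz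
        push_cast at hq ⊢
        rw [ZMod.natCast_self] at hq
        linear_combination hq)
    have h0 := congrFun hv 0
    simp at h0
  -- (2,1)
  · exfalso
    have e0 : ∀ j, γ 0 j = γ' 0 j := fun j => by
      have h := congrFun (congrFun heq 0) j
      simp [Matrix.mul_apply, Fin.sum_univ_three] at h; linear_combination h
    have e1 : ∀ j, a * γ 0 j + (ℓ:ℤ) * γ 1 j = γ' 1 j := fun j => by
      have h := congrFun (congrFun heq 1) j
      simp [Matrix.mul_apply, Fin.sum_univ_three] at h; linear_combination h
    have hv := rows_indep hγ' ![((a:ℤ) : ZMod ℓ), -1, 0]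
      (funext fun j => by
        simp only [Matrix.vecMul, dotProduct, Fin.sum_univ_three, Matrix.map_apply,
          Matrix.cons_val_zero, Matrix.cons_val_one, Matrix.head_cons, Pi.zero_apply,
          Matrix.cons_val_two, Matrix.tail_cons, Matrix.cons_val_fin_one, Matrix.cons_val', Matrix.empty_val']
        have hz : a * γ' 0 j - γ' 1 j = (ℓ:ℤ) * (- γ 1 j) := by
          linear_combination (e1 j) - a * (e0 j) - e1 j + e1 j
        have hq := congrArg (Int.cast : ℤ → ZMod ℓ) hz
        push_cast at hq ⊢
        rw [ZMod.natCast_self] at hq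
        linear_combination hq)
    have h1 := congrFun hv 1
    simp at h1
  -- (2,2)
  · have e0 : ∀ j, γ 0 j = γ' 0 j := fun j => by
      have h := congrFun (congrFun heq 0) j
      simp [Matrix.mul_apply, Fin.sum_univ_three] at h; linear_combination h
    have e1 : ∀ j, a * γ 0 j + (ℓ:ℤ) * γ 1 j = a' * γ' 0 j + (ℓ:ℤ) * γ' 1 j := fun j => by
      have h := congrFun (congrFun heq 1) j
      simp [Matrix.mul_apply, Fin.sum_univ_three] at h; linear_combination h
    have hv := rows_indep hγ ![((a:ℤ) : ZMod ℓ) - ((a':ℤ) : ZMod ℓ), 0, 0]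
      (funext fun j => by
        simp only [Matrix.vecMul, dotProduct, Fin.sum_univ_three, Matrix.map_apply,
          Matrix.cons_val_zero, Matrix.cons_val_one, Matrix.head_cons, Pi.zero_apply,
          Matrix.cons_val_two, Matrix.tail_cons, Matrix.cons_val_fin_one, Matrix.cons_val', Matrix.empty_val']
        have hz : (a - a') * γ 0 j = (ℓ:ℤ) * (γ' 1 j - γ 1 j) := by
          linear_combination (e1 j) - a' * (e0 j)
        have hq := congrArg (Int.cast : ℤ → ZMod ℓ) hz
        push_cast at hq ⊢
        rw [ZMod.natCast_self] at hq
        linear_combination hq)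
    have ha := congrFun hv 0
    simp [sub_eq_zero] at ha
    have haa : a = a' := by
      refine int_bounded_eq hℓ.pos ?_ ha0 ha1 ha0' ha1'
      rw [← ZMod.intCast_zmod_eq_zero_iff_dvd]; push_cast; rw [sub_eq_zero]; exact_mod_cast ha
    rw [haa]
  -- (2,3)
  · have e0 : ∀ j, γ 0 j = (ℓ:ℤ) * γ' 0 j := fun j => by
      have h := congrFun (congrFun heq 0) j
      simp [Matrix.mul_apply, Fin.sum_univ_three] at h; linear_combination h
    exfalso
    have hv := rows_indep hγ ![1, 0, 0]
      (funext fun j => by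
        simp only [Matrix.vecMul, dotProduct, Fin.sum_univ_three, Matrix.map_apply,
          Matrix.cons_val_zero, Matrix.cons_val_one, Matrix.head_cons, Pi.zero_apply,
          Matrix.cons_val_two, Matrix.tail_cons, Matrix.cons_val_fin_one, Matrix.cons_val', Matrix.empty_val']
        have hz : γ 0 j = (ℓ:ℤ) * (γ' 0 j) := by linear_combination (e0 j)
        have hq := congrArg (Int.cast : ℤ → ZMod ℓ) hz
        push_cast at hq ⊢
        rw [ZMod.natCast_self] at hq
        linear_combination hq)
    have h0 := congrFun hv 0
    simp at h0
  -- (3,1)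
  · have e0 : ∀ j, (ℓ:ℤ) * γ 0 j = γ' 0 j := fun j => by
      have h := congrFun (congrFun heq 0) j
      simp [Matrix.mul_apply, Fin.sum_univ_three] at h; linear_combination h
    exfalso
    have hv := rows_indep hγ' ![1, 0, 0]
      (funext fun j => by
        simp only [Matrix.vecMul, dotProduct, Fin.sum_univ_three, Matrix.map_apply,
          Matrix.cons_val_zero, Matrix.cons_val_one, Matrix.head_cons, Pi.zero_apply,
          Matrix.cons_val_two, Matrix.tail_cons, Matrix.cons_val_fin_one, Matrix.cons_val', Matrix.empty_val']
        have hz : γ' 0 j = (ℓ:ℤ) * (γ 0 j) := by linear_combination - (e0 j)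
        have hq := congrArg (Int.cast : ℤ → ZMod ℓ) hz
        push_cast at hq ⊢
        rw [ZMod.natCast_self] at hq
        linear_combination hq)
    have h0 := congrFun hv 0
    simp at h0
  -- (3,2)
  · have e0 : ∀ j, (ℓ:ℤ) * γ 0 j = γ' 0 j := fun j => by
      have h := congrFun (congrFun heq 0) j
      simp [Matrix.mul_apply, Fin.sum_univ_three] at h; linear_combination h
    exfalso
    have hv := rows_indep hγ' ![1, 0, 0]
      (funext fun j => by
        simp only [Matrix.vecMul, dotProduct, Fin.sum_univ_three, Matrix.map_apply,
          Matrix.cons_val_zero, Matrix.cons_val_one, Matrix.head_cons, Pi.zero_apply,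
          Matrix.cons_val_two, Matrix.tail_cons, Matrix.cons_val_fin_one, Matrix.cons_val', Matrix.empty_val']
        have hz : γ' 0 j = (ℓ:ℤ) * (γ 0 j) := by linear_combination - (e0 j)
        have hq := congrArg (Int.cast : ℤ → ZMod ℓ) hz
        push_cast at hq ⊢
        rw [ZMod.natCast_self] at hq
        linear_combination hq)
    have h0 := congrFun hv 0
    simp at h0
  -- (3,3)
  · rfl

lemma c4_ncard {ℓ : ℕ} (hℓ : ℓ.Prime) : (C4 ℓ).ncard = ℓ ^ 2 + ℓ + 1 := by
  classical
  have hℓ1 : 1 < ℓ := hℓ.one_lt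
  set f1 : ℕ × ℕ → Matrix (Fin 3) (Fin 3) ℤ :=
    fun p => !![1,0,0;0,1,0;(p.1:ℤ),(p.2:ℤ),(ℓ:ℤ)] with hf1
  set f2 : ℕ → Matrix (Fin 3) (Fin 3) ℤ := fun a => !![1,0,0;(a:ℤ),(ℓ:ℤ),0;0,0,1] with hf2
  set F : Finset (Matrix (Fin 3) (Fin 3) ℤ) :=
    ((Finset.range ℓ ×ˢ Finset.range ℓ).image f1 ∪ (Finset.range ℓ).image f2) ∪
      {!![(ℓ:ℤ),0,0;0,1,0;0,0,1]} with hF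
  have hset : C4 ℓ = ↑F := by
    ext M
    constructor
    · rintro (⟨b, c, hb0, hb1, hc0, hc1, rfl⟩ | ⟨a, ha0, ha1, rfl⟩ | rfl)
      · refine Finset.mem_coe.mpr (Finset.mem_union_left _ (Finset.mem_union_left _
          (Finset.mem_image.mpr ⟨(b.toNat, c.toNat), ?_, ?_⟩)))
        · rw [Finset.mem_product]
          constructor <;> rw [Finset.mem_range] <;> omega
        · rw [hf1]
          simp only
          rw [Int.toNat_of_nonneg hb0, Int.toNat_of_nonneg hc0]
      · refine Finset.mem_coe.mpr (Finset.mem_union_left _ (Finset.mem_union_right _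
          (Finset.mem_image.mpr ⟨a.toNat, ?_, ?_⟩)))
        · rw [Finset.mem_range]; omega
        · rw [hf2]
          simp only
          rw [Int.toNat_of_nonneg ha0]
      · exact Finset.mem_coe.mpr (Finset.mem_union_right _ (Finset.mem_singleton_self _))
    · intro hM
      rw [Finset.mem_coe, hF] at hM
      rcases Finset.mem_union.mp hM with hM | hM
      · rcases Finset.mem_union.mp hM with hM | hM
        · obtain ⟨p, hp, rfl⟩ := Finset.mem_image.mp hM
          rw [Finset.mem_product, Finset.mem_range, Finset.mem_range] at hp
          exact Or.inl ⟨p.1, p.2, by positivity, by omega, by positivity, by omega, rfl⟩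
        · obtain ⟨a, ha, rfl⟩ := Finset.mem_image.mp hM
          rw [Finset.mem_range] at ha
          exact Or.inr (Or.inl ⟨a, by positivity, by omega, rfl⟩)
      · exact Or.inr (Or.inr (Finset.mem_singleton.mp hM))
  rw [hset, Set.ncard_coe_finset]
  have hinj1 : Function.Injective f1 := by
    intro p q hpq
    have h20 := congrFun (congrFun hpq 2) 0
    have h21 := congrFun (congrFun hpq 2) 1
    simp [hf1] at h20 h21
    exact Prod.ext h20 h21
  have hinj2 : Function.Injective f2 := by
    intro p q hpq
    have h10 := congrFun (congrFun hpq 1) 0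
    simp [hf2] at h10
    exact h10
  have hd12 : Disjoint ((Finset.range ℓ ×ˢ Finset.range ℓ).image f1)
      ((Finset.range ℓ).image f2) := by
    rw [Finset.disjoint_left]
    rintro M hM1 hM2
    obtain ⟨p, _, rfl⟩ := Finset.mem_image.mp hM1
    obtain ⟨a, _, ha⟩ := Finset.mem_image.mp hM2
    have := congrFun (congrFun ha 2) 2
    simp [hf1, hf2] at this
    omega
  have hd3 : Disjoint (((Finset.range ℓ ×ˢ Finset.range ℓ).image f1 ∪
      (Finset.range ℓ).image f2)) ({!![(ℓ:ℤ),0,0;0,1,0;0,0,1]} :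
        Finset (Matrix (Fin 3) (Fin 3) ℤ)) := by
    rw [Finset.disjoint_right]
    intro M hM hM'
    rw [Finset.mem_singleton] at hM
    subst hM
    rcases Finset.mem_union.mp hM' with h | h
    · obtain ⟨p, _, hp⟩ := Finset.mem_image.mp h
      have := congrFun (congrFun hp 0) 0
      simp [hf1] at this
      omega
    · obtain ⟨a, _, hp⟩ := Finset.mem_image.mp h
      have := congrFun (congrFun hp 0) 0
      simp [hf2] at this
      omega
  rw [hF, Finset.card_union_of_disjoint hd3, Finset.card_union_of_disjoint hd12,
    Finset.card_image_of_injective _ hinj1, Finset.card_image_of_injective _ hinj2,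
    Finset.card_product, Finset.card_range, Finset.card_singleton]
  ring

/-- for `s = diag(1,1,ℓ)` with `ℓ ∤ N` prime, the double coset `ΓsΓ`
is the disjoint union of the `ℓ² + ℓ + 1` left cosets `gΓ`, `g ∈ C`. -/
theorem stmt4 (N : ℕ) (hN : 0 < N) (ℓ : ℕ) (hℓ : ℓ.Prime) (hℓN : ¬ ℓ ∣ N) :
    ({m | ∃ γ₁ ∈ Gamma03 N, ∃ γ₂ ∈ Gamma03 N,
        m = γ₁ * !![1, 0, 0; 0, 1, 0; 0, 0, (ℓ : ℤ)] * γ₂} =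
      ⋃ g ∈ C4 ℓ, {m | ∃ γ ∈ Gamma03 N, m = g * γ}) ∧
    (∀ g ∈ C4 ℓ, ∀ g' ∈ C4 ℓ, g ≠ g' →
      Disjoint {m | ∃ γ ∈ Gamma03 N, m = g * γ} {m | ∃ γ ∈ Gamma03 N, m = g' * γ}) ∧
    (C4 ℓ).ncard = ℓ ^ 2 + ℓ + 1 := by
  haveI : Fact ℓ.Prime := ⟨hℓ⟩
  refine ⟨?_, ?_, c4_ncard hℓ⟩
  · ext m
    simp only [Set.mem_setOf_eq, Set.mem_iUnion]
    constructor
    · rintro ⟨γ₁, hγ₁, γ₂, hγ₂, rfl⟩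
      have hdet : (γ₁ * !![1, 0, 0; 0, 1, 0; 0, 0, (ℓ : ℤ)] * γ₂).det = (ℓ:ℤ) := by
        rw [Matrix.det_mul, Matrix.det_mul, hγ₁.1, hγ₂.1]
        simp [Matrix.det_fin_three]
      have hrow : ∀ j : Fin 3, (N:ℤ) ∣ γ₂ 0 j →
          (N:ℤ) ∣ (γ₁ * !![1, 0, 0; 0, 1, 0; 0, 0, (ℓ : ℤ)] * γ₂) 0 j := by
        intro j hj
        obtain ⟨x, hx⟩ := hγ₁.2.1
        obtain ⟨y, hy⟩ := hγ₁.2.2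
        obtain ⟨z, hz⟩ := hj
        simp only [Matrix.mul_apply, Fin.sum_univ_three]
        simp [Matrix.vecHead, Matrix.vecTail]
        rw [hx, hy, hz]
        exact ⟨γ₁ 0 0 * z + x * γ₂ 1 j + y * (ℓ:ℤ) * γ₂ 2 j, by ring⟩
      obtain ⟨g, hg, γ, hγ, hm⟩ := key_decomp hℓ hℓN hdet (hrow 1 hγ₂.2.1) (hrow 2 hγ₂.2.2)
      exact ⟨g, hg, γ, hγ, hm⟩
    · rintro ⟨g, hg, γ, hγ, rfl⟩
      obtain ⟨γ₁, hγ₁, γ₂, hγ₂, hgeq⟩ := repr4 hℓ hℓN hg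
      exact ⟨γ₁, hγ₁, γ₂ * γ, Gamma03.mul_mem hγ₂ hγ,
        by rw [hgeq, mul_assoc (γ₁ * _), mul_assoc]⟩
  · intro g hg g' hg' hne
    rw [Set.disjoint_left]
    rintro m ⟨γ, hγ, rfl⟩ ⟨γ', hγ', heq⟩
    exact hne (coset_eq hℓ hg hg' hγ hγ' heq)
end

section
/- Let ℓ be a prime not dividing N and let d be a positive divisor of N with gcd(d, N/d) = 1. Let s = [[ℓ₁,0,0],[a,ℓ₂,0],[b,c,ℓ₃]] be a lower-triangular integer matrix with ℓ₁, ℓ₂, ℓ₃ ∈ {1, ℓ}, and suppose ℓ₁ = ℓ₂ and a = 0. Then there exists γ ∈ Γ₀(3,N) of the form [[A,B,0],[C,D,0],[0,0,1]] such that sγ ∈ P_d, and the matrix x = g_d s γ g_d⁻¹ ∈ P₀ satisfies x₁₁ = ℓ₁ and ψ₀²(x) = [[ℓ₂, 0],[c − bd, ℓ₃]]. -/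
open Matrix

/-- `g_x`: the 3×3 identity matrix with its `(1,2)` entry replaced by `x`. -/
def g3 (x : ℤ) : Matrix (Fin 3) (Fin 3) ℤ := !![1, x, 0; 0, 1, 0; 0, 0, 1]

/-- Conjugation `g_d m g_d⁻¹` (note `g_d⁻¹ = g_{-d}`). -/
def conj3 (d : ℤ) (m : Matrix (Fin 3) (Fin 3) ℤ) : Matrix (Fin 3) (Fin 3) ℤ :=
  g3 d * m * g3 (-d)

/-- `ψ₀²`: the lower-right 2×2 block. -/
def psi02 (m : Matrix (Fin 3) (Fin 3) ℤ) : Matrix (Fin 2) (Fin 2) ℤ :=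
  !![m 1 1, m 1 2; m 2 1, m 2 2]

/-- case 1 of Theorem calcx: `ℓ₁ = ℓ₂`, `a = 0`. -/
theorem stmt8 (N : ℕ) (hN : 0 < N) (ℓ : ℕ) (hℓ : ℓ.Prime) (hℓN : ¬ ℓ ∣ N)
    (d : ℕ) (hd : 0 < d) (hdvd : d ∣ N) (hgcd : Nat.gcd d (N / d) = 1)
    (ℓ₁ ℓ₂ ℓ₃ a b c : ℤ)
    (h1 : ℓ₁ = 1 ∨ ℓ₁ = (ℓ : ℤ)) (h2 : ℓ₂ = 1 ∨ ℓ₂ = (ℓ : ℤ)) (h3 : ℓ₃ = 1 ∨ ℓ₃ = (ℓ : ℤ))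
    (h12 : ℓ₁ = ℓ₂) (ha : a = 0) :
    ∃ A B C D : ℤ, ∃ x : Matrix (Fin 3) (Fin 3) ℤ,
      (!![A, B, 0; C, D, 0; 0, 0, 1] : Matrix (Fin 3) (Fin 3) ℤ) ∈ Gamma03 N ∧
      x = conj3 (d : ℤ)
        (!![ℓ₁, 0, 0; a, ℓ₂, 0; b, c, ℓ₃] * !![A, B, 0; C, D, 0; 0, 0, 1]) ∧
      x.det ≠ 0 ∧ (∀ j : Fin 3, j ≠ 0 → x 0 j = 0) ∧
      x 0 0 = ℓ₁ ∧ psi02 x = !![ℓ₂, 0; c - b * (d : ℤ), ℓ₃] := by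
  subst h12 ha
  have hl1 : ℓ₁ ≠ 0 := by rcases h1 with h | h <;> simp [h, hℓ.ne_zero]
  have hl3 : ℓ₃ ≠ 0 := by rcases h3 with h | h <;> simp [h, hℓ.ne_zero]
  refine ⟨1, 0, 0, 1, conj3 (d : ℤ)
      (!![ℓ₁, 0, 0; 0, ℓ₁, 0; b, c, ℓ₃] * !![1, 0, 0; 0, 1, 0; 0, 0, 1]), ?_, rfl, ?_, ?_, ?_, ?_⟩
  · refine ⟨?_, by simp, by simp⟩
    simp [Matrix.det_fin_three]
  · simp only [conj3, g3, Matrix.det_mul]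
    simp [Matrix.det_fin_three, hl1, hl3]
  · intro j hj
    fin_cases j
    · exact absurd rfl hj
    · simp [conj3, g3, Matrix.mul_apply, Fin.sum_univ_three]; ring
    · simp [conj3, g3, Matrix.mul_apply, Fin.sum_univ_three]
  · simp [conj3, g3, Matrix.mul_apply, Fin.sum_univ_three]
  · ext i j
    fin_cases i <;> fin_cases j <;>
      simp [psi02, conj3, g3, Matrix.mul_apply, Fin.sum_univ_three] <;> ring
end

section
/- Let ℓ be a prime not dividing N and let d be a positive divisor of N with gcd(d, N/d) = 1. Let s = [[ℓ,0,0],[0,1,0],[b,c,ℓ₃]] be a lower-triangular integer matrix with ℓ₃ ∈ {1, ℓ}. Then there exists γ ∈ Γ₀(3,N) of the form [[A,B,0],[C,D,0],[0,0,1]] such that sγ ∈ P_d, and the matrix x = g_d s γ g_d⁻¹ ∈ P₀ satisfies x₁₁ = 1 and ψ₀²(x) = [[ℓ, 0],[−bd + cℓ, ℓ₃]]. -/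
open Matrix

/-
The block `γ = [[A, d(A-1)], [C, ℓ + dC]]` has determinant `ℓA + dC`, and conjugating `sγ` by `g_d`
gives the lower-triangular matrix `[[ℓA + dC, 0, 0], [C, ℓ, 0], [bA + cC, -bd + cℓ, ℓ₃]]`. So it
suffices to solve `ℓA + dC = 1` with `A ≡ 1 (mod N/d)`, which makes `d(A-1)` divisible by `N`; this
is a Chinese-remainder problem, solvable because `ℓ · (N/d)` is prime to `d`.
-/

theorem exists_mul_add_mul_eq_one_and_dvd_sub_one {l d M : ℤ} (h : IsCoprime (l * M) d) :
    ∃ A C : ℤ, l * A + d * C = 1 ∧ M ∣ A - 1 := by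
  obtain ⟨u, v, huv⟩ := h
  exact ⟨1 + M * u * (1 - l), (1 - l) * v, by linear_combination (1 - l) * huv,
    ⟨u * (1 - l), by ring⟩⟩

theorem det_blockTwoOne (A B C D : ℤ) :
    (!![A, B, 0; C, D, 0; 0, 0, 1] : Matrix (Fin 3) (Fin 3) ℤ).det = A * D - B * C := by
  simp [det_fin_three]

theorem det_lowerTriangular (a e f g h k : ℤ) :
    (!![a, 0, 0; e, f, 0; g, h, k] : Matrix (Fin 3) (Fin 3) ℤ).det = a * f * k := by
  simp [det_fin_three]

theorem conj3_mul_blockTwoOne (d l l₃ b c A C : ℤ) :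
    conj3 d (!![l, 0, 0; 0, 1, 0; b, c, l₃] * !![A, d * (A - 1), 0; C, l + d * C, 0; 0, 0, 1])
      = !![l * A + d * C, 0, 0; C, l, 0; b * A + c * C, -b * d + c * l, l₃] := by
  unfold conj3 g3
  ext i j
  fin_cases i <;> fin_cases j <;> simp [mul_apply, Fin.sum_univ_three] <;> ring

theorem stmt9_general (N : ℕ) (ℓ : ℕ) (hℓ : ℓ.Prime) (hℓN : ¬ ℓ ∣ N)
    (d : ℕ) (hdvd : d ∣ N) (hgcd : Nat.gcd d (N / d) = 1)
    (ℓ₃ b c : ℤ) (h3 : ℓ₃ = 1 ∨ ℓ₃ = (ℓ : ℤ)) :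
    ∃ A B C D : ℤ, ∃ x : Matrix (Fin 3) (Fin 3) ℤ,
      (!![A, B, 0; C, D, 0; 0, 0, 1] : Matrix (Fin 3) (Fin 3) ℤ) ∈ Gamma03 N ∧
      x = conj3 (d : ℤ)
        (!![(ℓ : ℤ), 0, 0; 0, 1, 0; b, c, ℓ₃] * !![A, B, 0; C, D, 0; 0, 0, 1]) ∧
      x.det ≠ 0 ∧ (∀ j : Fin 3, j ≠ 0 → x 0 j = 0) ∧
      x 0 0 = 1 ∧ psi02 x = !![(ℓ : ℤ), 0; -b * (d : ℤ) + c * (ℓ : ℤ), ℓ₃] := by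
  have hN : (N : ℤ) = d * (N / d : ℕ) := by exact_mod_cast (Nat.mul_div_cancel' hdvd).symm
  have hℓd : IsCoprime (ℓ : ℤ) d := Int.isCoprime_iff_gcd_eq_one.mpr <| by
    exact_mod_cast (hℓ.coprime_iff_not_dvd).mpr fun h ↦ hℓN (h.trans hdvd)
  have hMd : IsCoprime ((N / d : ℕ) : ℤ) d := Int.isCoprime_iff_gcd_eq_one.mpr <| by
    exact_mod_cast Nat.coprime_comm.mp hgcd
  obtain ⟨A, C, hAC, hA⟩ := exists_mul_add_mul_eq_one_and_dvd_sub_one (hℓd.mul_left hMd)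
  have hℓ₃ : ℓ₃ ≠ 0 := by rcases h3 with rfl | rfl <;> simp [hℓ.ne_zero]
  refine ⟨A, d * (A - 1), C, ℓ + d * C, _, ⟨?_, ?_, dvd_zero _⟩, rfl, ?_⟩
  · rw [det_blockTwoOne]; linear_combination hAC
  · rw [hN]; exact mul_dvd_mul_left _ hA
  · rw [conj3_mul_blockTwoOne, hAC, det_lowerTriangular]
    refine ⟨by simp [hℓ.ne_zero, hℓ₃], fun j hj ↦ ?_, rfl, ?_⟩
    · fin_cases j <;> simp at hj ⊢
    · ext i j; fin_cases i <;> fin_cases j <;> rfl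

/-- case 2 of Theorem calcx: `ℓ₁ = ℓ`, `ℓ₂ = 1`, `a = 0`. -/
theorem stmt9 (N : ℕ) (hN : 0 < N) (ℓ : ℕ) (hℓ : ℓ.Prime) (hℓN : ¬ ℓ ∣ N)
    (d : ℕ) (hd : 0 < d) (hdvd : d ∣ N) (hgcd : Nat.gcd d (N / d) = 1)
    (ℓ₃ b c : ℤ) (h3 : ℓ₃ = 1 ∨ ℓ₃ = (ℓ : ℤ)) :
    ∃ A B C D : ℤ, ∃ x : Matrix (Fin 3) (Fin 3) ℤ,
      (!![A, B, 0; C, D, 0; 0, 0, 1] : Matrix (Fin 3) (Fin 3) ℤ) ∈ Gamma03 N ∧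
      x = conj3 (d : ℤ)
        (!![(ℓ : ℤ), 0, 0; 0, 1, 0; b, c, ℓ₃] * !![A, B, 0; C, D, 0; 0, 0, 1]) ∧
      x.det ≠ 0 ∧ (∀ j : Fin 3, j ≠ 0 → x 0 j = 0) ∧
      x 0 0 = 1 ∧ psi02 x = !![(ℓ : ℤ), 0; -b * (d : ℤ) + c * (ℓ : ℤ), ℓ₃] :=
  stmt9_general N ℓ hℓ hℓN d hdvd hgcd ℓ₃ b c h3
end

section
/- Let ℓ be a prime not dividing N and let d be a positive divisor of N with gcd(d, N/d) = 1. Let s = [[1,0,0],[a,ℓ,0],[b,c,ℓ₃]] be a lower-triangular integer matrix with ℓ₃ ∈ {1, ℓ}, and suppose ℓ divides ad + 1. Then there exists γ ∈ Γ₀(3,N) of the form [[A,B,0],[C,D,0],[0,0,1]] such that sγ ∈ P_d, and the matrix x = g_d s γ g_d⁻¹ ∈ P₀ satisfies x₁₁ = ℓ and ψ₀²(x) = [[1, 0],[−bd + c·(ad+1)/ℓ, ℓ₃]]. -/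
open Matrix

/-- case 4 of Theorem calcx: `ℓ₁ = 1`, `ℓ₂ = ℓ`, `ℓ ∣ ad + 1`. -/
theorem stmt11 (N : ℕ) (hN : 0 < N) (ℓ : ℕ) (hℓ : ℓ.Prime) (hℓN : ¬ ℓ ∣ N)
    (d : ℕ) (hd : 0 < d) (hdvd : d ∣ N) (hgcd : Nat.gcd d (N / d) = 1)
    (ℓ₃ a b c : ℤ) (h3 : ℓ₃ = 1 ∨ ℓ₃ = (ℓ : ℤ)) (hdivd : (ℓ : ℤ) ∣ (a * (d : ℤ) + 1)) :
    ∃ A B C D : ℤ, ∃ x : Matrix (Fin 3) (Fin 3) ℤ,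
      (!![A, B, 0; C, D, 0; 0, 0, 1] : Matrix (Fin 3) (Fin 3) ℤ) ∈ Gamma03 N ∧
      x = conj3 (d : ℤ)
        (!![1, 0, 0; a, (ℓ : ℤ), 0; b, c, ℓ₃] * !![A, B, 0; C, D, 0; 0, 0, 1]) ∧
      x.det ≠ 0 ∧ (∀ j : Fin 3, j ≠ 0 → x 0 j = 0) ∧
      x 0 0 = (ℓ : ℤ) ∧
      psi02 x = !![1, 0;
        -b * (d : ℤ) + c * ((a * (d : ℤ) + 1) / (ℓ : ℤ)), ℓ₃] := by
  obtain ⟨k, hk⟩ := hdivd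
  have hco : IsCoprime (d : ℤ) ((N / d : ℕ) : ℤ) :=
    Nat.isCoprime_iff_coprime.mpr hgcd
  obtain ⟨u, v, huv⟩ := hco
  have hdn : (d : ℤ) * ((N / d : ℕ) : ℤ) = (N : ℤ) := by
    exact_mod_cast congrArg (Nat.cast : ℕ → ℤ) (Nat.mul_div_cancel' hdvd)
  set A : ℤ := (ℓ : ℤ) + (d : ℤ) * u * (1 - (ℓ : ℤ)) with hA
  set C : ℤ := -(a + u * k * (1 - (ℓ : ℤ))) with hC
  set B : ℤ := (N : ℤ) * v * ((ℓ : ℤ) - 1) with hBdef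
  set D : ℤ := k + (d : ℤ) * C with hD'
  have hAkC : A * k + (d : ℤ) * C = 1 := by
    simp only [hA, hC]; linear_combination -hk
  have hB : B = (d : ℤ) * (A - 1) := by
    simp only [hA, hBdef]
    linear_combination (-(v * ((ℓ : ℤ) - 1))) * hdn + ((d : ℤ) * ((ℓ : ℤ) - 1)) * huv
  have hD : D = k + (d : ℤ) * C := hD'
  clear_value A B C D
  have hℓ0 : (ℓ : ℤ) ≠ 0 := by exact_mod_cast hℓ.ne_zero
  have hkdiv : (a * (d : ℤ) + 1) / (ℓ : ℤ) = k := by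
    rw [hk, Int.mul_ediv_cancel_left _ hℓ0]
  refine ⟨A, B, C, D,
    conj3 (d : ℤ) (!![1, 0, 0; a, (ℓ : ℤ), 0; b, c, ℓ₃] * !![A, B, 0; C, D, 0; 0, 0, 1]),
    ⟨?_, ?_, ?_⟩, rfl, ?_⟩
  · -- det = 1
    rw [Matrix.det_fin_three]
    simp
    linear_combination A * hD - C * hB + hAkC
  · exact ⟨v * ((ℓ : ℤ) - 1), by rw [show (!![A, B, 0; C, D, 0; 0, 0, 1] : Matrix (Fin 3) (Fin 3) ℤ) 0 1 = B by simp, hBdef]; ring⟩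
  · simp
  have hx : conj3 (d : ℤ) (!![1, 0, 0; a, (ℓ : ℤ), 0; b, c, ℓ₃] * !![A, B, 0; C, D, 0; 0, 0, 1])
      = !![(ℓ : ℤ), 0, 0; a * A + (ℓ : ℤ) * C, 1, 0; b * A + c * C, -b * (d : ℤ) + c * k, ℓ₃] := by
    ext i j
    fin_cases i <;> fin_cases j <;>
      simp [conj3, g3, Matrix.mul_apply, Fin.sum_univ_three, Matrix.vecHead, Matrix.vecTail] <;>
      ring_nf <;>
      first
        | linear_combination A * hk + (ℓ : ℤ) * hAkC
        | linear_combination (1 + (d : ℤ) * a) * hB + (d : ℤ) * (ℓ : ℤ) * hD - (d : ℤ) * hk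
        | linear_combination a * hB + (ℓ : ℤ) * hD - hk
        | linear_combination b * hB + c * hD
  rw [hx]
  refine ⟨?_, ?_, by simp, ?_⟩
  · rw [Matrix.det_fin_three]
    simp
    refine ⟨by exact_mod_cast hℓ.ne_zero, ?_⟩
    rcases h3 with h | h <;> rw [h]
    · exact one_ne_zero
    · exact hℓ0
  · intro j hj
    fin_cases j
    · exact absurd rfl hj
    · simp
    · simp
  · rw [hkdiv]
    rfl
end

section
/- Let G be a group, Γ a subgroup of G, and s ∈ G, and suppose the double coset ΓsΓ is the disjoint union of finitely many left cosets s_αΓ (α ∈ I). Let X be a set with a right G-action and let a, b ∈ X. Then: (1) the representatives s_α may be chosen so that for every α with a·s_α ∈ b·Γ one has a·s_α = b; and (2) for any such choice, letting Γ_b = {γ ∈ Γ : b·γ = b}, the set {t ∈ ΓsΓ : a·t = b} equals the union ⋃_{α : a·s_α = b} s_α·Γ_b, and these left cosets s_α·Γ_b are pairwise disjoint. -/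
/-- let `ΓsΓ = ⨆ s_α Γ` be a finite disjoint left-coset decomposition of a
double coset, and let `X` be a right `G`-set, `a b ∈ X`.  Then (1) the representatives
can be rechosen (within their cosets) so that `a·s_α ∈ bΓ → a·s_α = b`, and (2) for any
such choice, `{t ∈ ΓsΓ : a·t = b}` is the disjoint union of the cosets `s_α Γ_b` over the
`α` with `a·s_α = b`, where `Γ_b` is the stabilizer of `b` in `Γ`. -/
theorem stmt14 (G : Type*) [Group G] (Γ : Subgroup G) (s : G)
    (ι : Type*) [Fintype ι] (sα : ι → G)
    (hcover : {g | ∃ γ₁ ∈ Γ, ∃ γ₂ ∈ Γ, g = γ₁ * s * γ₂}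
      = ⋃ α, {x | ∃ γ ∈ Γ, x = sα α * γ})
    (hdisj : ∀ α β, α ≠ β →
      Disjoint {x | ∃ γ ∈ Γ, x = sα α * γ} {x | ∃ γ ∈ Γ, x = sα β * γ})
    (X : Type*) (act : X → G → X) (hact1 : ∀ x, act x 1 = x)
    (hactmul : ∀ x g g', act (act x g) g' = act x (g * g'))
    (a b : X) :
    (∃ t : ι → G, (∀ α, ∃ γ ∈ Γ, t α = sα α * γ) ∧
      (∀ α, (∃ γ ∈ Γ, act a (t α) = act b γ) → act a (t α) = b)) ∧
    (∀ t : ι → G, (∀ α, ∃ γ ∈ Γ, t α = sα α * γ) →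
      (∀ α, (∃ γ ∈ Γ, act a (t α) = act b γ) → act a (t α) = b) →
      ({g | (∃ γ₁ ∈ Γ, ∃ γ₂ ∈ Γ, g = γ₁ * s * γ₂) ∧ act a g = b}
          = ⋃ α ∈ {α | act a (t α) = b}, {x | ∃ γ ∈ Γ, act b γ = b ∧ x = t α * γ}) ∧
      (∀ α β, α ≠ β → act a (t α) = b → act a (t β) = b →
        Disjoint {x | ∃ γ ∈ Γ, act b γ = b ∧ x = t α * γ}
          {x | ∃ γ ∈ Γ, act b γ = b ∧ x = t β * γ})) := by
  classical
  constructor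
  · refine ⟨fun α => if h : ∃ γ ∈ Γ, act a (sα α) = act b γ
        then sα α * h.choose⁻¹ else sα α, ?_, ?_⟩
    · intro α
      by_cases h : ∃ γ ∈ Γ, act a (sα α) = act b γ
      · simp only [dif_pos h]
        exact ⟨h.choose⁻¹, Γ.inv_mem h.choose_spec.1, rfl⟩
      · simp only [dif_neg h]
        exact ⟨1, Γ.one_mem, by group⟩
    · intro α hγ
      by_cases h : ∃ γ ∈ Γ, act a (sα α) = act b γ
      · simp only [dif_pos h]
        have key : ∀ γ : G, act a (sα α) = act b γ → act a (sα α * γ⁻¹) = b := by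
          intro γ hγ'
          rw [← hactmul, hγ', hactmul, mul_inv_cancel, hact1]
        exact key h.choose h.choose_spec.2
      · simp only [dif_neg h] at hγ
        exact absurd hγ h
  · intro t ht hprop
    constructor
    · ext g
      simp only [Set.mem_setOf_eq, Set.mem_iUnion]
      constructor
      · rintro ⟨hg, hab⟩
        have hg' : g ∈ ⋃ α, {x | ∃ γ ∈ Γ, x = sα α * γ} := hcover ▸ hg
        obtain ⟨α, γ, hγ, rfl⟩ : ∃ α, ∃ γ ∈ Γ, g = sα α * γ := by
          simpa using hg'
        obtain ⟨γα, hγα, htα⟩ := ht α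
        set δ := γα⁻¹ * γ with hδdef
        have hδ : δ ∈ Γ := Γ.mul_mem (Γ.inv_mem hγα) hγ
        have hg2 : sα α * γ = t α * δ := by rw [htα, hδdef]; group
        have hab' : act (act a (t α)) δ = b := by rw [hactmul, ← hg2]; exact hab
        have hb : act a (t α) = b := by
          apply hprop α
          refine ⟨δ⁻¹, Γ.inv_mem hδ, ?_⟩
          rw [← hab', hactmul, mul_inv_cancel, hact1]
        exact ⟨α, hb, δ, hδ, hb ▸ hab', hg2⟩
      · rintro ⟨α, hα, γ, hγ, hbγ, rfl⟩
        obtain ⟨γα, hγα, htα⟩ := ht α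
        constructor
        · have hmem : t α * γ ∈ ⋃ β, {x | ∃ γ ∈ Γ, x = sα β * γ} :=
            Set.mem_iUnion.2 ⟨α, γα * γ, Γ.mul_mem hγα hγ, by rw [htα]; group⟩
          exact hcover.ge hmem
        · rw [← hactmul, hα, hbγ]
    · intro α β hne hαb hβb
      rw [Set.disjoint_left]
      rintro x ⟨γ, hγ, -, rfl⟩ ⟨γ', hγ', -, heq⟩
      obtain ⟨γα, hγα, htα⟩ := ht α
      obtain ⟨γβ, hγβ, htβ⟩ := ht β
      have h1 : t α * γ ∈ {x | ∃ γ ∈ Γ, x = sα α * γ} :=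
        ⟨γα * γ, Γ.mul_mem hγα hγ, by rw [htα]; group⟩
      have h2 : t α * γ ∈ {x | ∃ γ ∈ Γ, x = sα β * γ} :=
        ⟨γβ * γ', Γ.mul_mem hγβ hγ', by rw [heq, htβ]; group⟩
      exact Set.disjoint_left.1 (hdisj α β hne) h1 h2
end

section
/- Let n ≥ 1 and let v₁, …, v_m be nonzero vectors in ℚⁿ that span ℚⁿ. Then the group of all g ∈ GL(n,ℤ) such that multiplication by g permutes the set of lines {ℚv₁, …, ℚv_m} (i.e. for each i there is a j with v_i·g ∈ ℚv_j) is a finite group. -/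
/-!
Choose `D ≠ 0` with every `D • vᵢ` integral. If `vᵢ g = t vⱼ` with `g ∈ GL(n,ℤ)`, then also
`vⱼ g⁻¹ = t⁻¹ vᵢ`, and since `g` and `g⁻¹` are integral, so are `t • D vⱼ` and `t⁻¹ • D vᵢ`.
For coordinates `k`, `l` with `vⱼ k ≠ 0 ≠ vᵢ l`, the integer `t D vⱼ k` then divides the product
`(t D vⱼ k) (t⁻¹ D vᵢ l) = D² vⱼ k vᵢ l ≠ 0`, so `t`, and with it `vᵢ g`, takes finitely many
values. Finally `g` is determined by the vectors `vᵢ g` because the `vᵢ` span `ℚⁿ`.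
-/

open Matrix IsLocalization

lemma Int.finite_setOf_dvd {N : ℤ} (hN : N ≠ 0) : {a : ℤ | a ∣ N}.Finite :=
  (Set.finite_Icc (-N.natAbs : ℤ) N.natAbs).subset fun a ha => by
    have := Int.natAbs_le_of_dvd_ne_zero ha hN
    simp only [Set.mem_Icc]
    omega

lemma Rat.finite_setOf_isInteger_mul_and_isInteger_inv_mul {x y : ℚ} (hx : x ≠ 0) (hy : y ≠ 0) :
    {t : ℚ | IsInteger ℤ (t * x) ∧ IsInteger ℤ (t⁻¹ * y)}.Finite := by
  refine Set.Finite.of_finite_image ?_ (mul_left_injective₀ hx).injOn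
  refine (((Int.finite_setOf_dvd (Rat.num_ne_zero.2 (mul_ne_zero hx hy))).image
    ((↑) : ℤ → ℚ)).insert 0).subset ?_
  rintro _ ⟨t, ⟨⟨a, ha⟩, ⟨b, hb⟩⟩, rfl⟩
  rcases eq_or_ne t 0 with rfl | ht
  · simp
  have hab : ((a * b : ℤ) : ℚ) = x * y := by
    simp only [algebraMap_int_eq, eq_intCast] at ha hb
    rw [Int.cast_mul, ha, hb]
    field_simp
  exact Or.inr ⟨a, ⟨b, by rw [← hab, Rat.num_intCast]⟩, by simpa using ha⟩

lemma finite_setOf_isInteger_smul_and_isInteger_inv_smul {ι : Type*} {x y : ι → ℚ}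
    (hx : x ≠ 0) (hy : y ≠ 0) :
    {t : ℚ | (∀ k, IsInteger ℤ ((t • x) k)) ∧ ∀ k, IsInteger ℤ ((t⁻¹ • y) k)}.Finite := by
  obtain ⟨k, hk⟩ := Function.ne_iff.1 hx
  obtain ⟨l, hl⟩ := Function.ne_iff.1 hy
  exact (Rat.finite_setOf_isInteger_mul_and_isInteger_inv_mul hk hl).subset
    fun t ht => ⟨ht.1 k, ht.2 l⟩

lemma isInteger_vecMul_map_intCast {m n : Type*} [Fintype m] {w : m → ℚ}
    (hw : ∀ k, IsInteger ℤ (w k)) (A : Matrix m n ℤ) (l : n) :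
    IsInteger ℤ ((w ᵥ* A.map ((↑) : ℤ → ℚ)) l) :=
  Subsemiring.sum_mem _ fun k _ => Subsemiring.mul_mem _ (hw k) ⟨A k l, by simp⟩

lemma isInteger_smul_and_isInteger_inv_smul_of_vecMul_eq {ι : Type*} [Fintype ι] [DecidableEq ι]
    {x y : ι → ℚ} (hx : ∀ k, IsInteger ℤ (x k)) (hy : ∀ k, IsInteger ℤ (y k))
    {g : Matrix ι ι ℤ} (hg : IsUnit g.det) {t : ℚ} (h : x ᵥ* g.map (↑) = t • y) :
    (∀ k, IsInteger ℤ ((t • y) k)) ∧ ∀ k, IsInteger ℤ ((t⁻¹ • x) k) := by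
  refine ⟨h ▸ isInteger_vecMul_map_intCast hx g, ?_⟩
  rcases eq_or_ne t 0 with rfl | ht
  · simpa using fun _ => isInteger_zero
  have hinv : g.map ((↑) : ℤ → ℚ) * g⁻¹.map (↑) = 1 := by
    have := map_mul (Int.castRingHom ℚ).mapMatrix g g⁻¹
    rw [mul_nonsing_inv g hg, map_one] at this
    exact this.symm
  have hyx : y ᵥ* g⁻¹.map (↑) = t⁻¹ • x := by
    rw [← inv_smul_smul₀ ht y, ← h, smul_vecMul, vecMul_vecMul, hinv, vecMul_one]
  exact hyx ▸ isInteger_vecMul_map_intCast hy g⁻¹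

lemma finite_setOf_exists_vecMul_map_intCast_eq_smul {ι : Type*} [Fintype ι] [DecidableEq ι]
    {x y : ι → ℚ} (hx : x ≠ 0) (hy : y ≠ 0) :
    {t : ℚ | ∃ g : Matrix ι ι ℤ, IsUnit g.det ∧ x ᵥ* g.map (↑) = t • y}.Finite := by
  obtain ⟨⟨D, hD⟩, hDint⟩ := exist_integer_multiples_of_finite (nonZeroDivisors ℤ) (S := ℚ)
    (Sum.elim x y)
  have hD0 : D ≠ 0 := nonZeroDivisors.ne_zero hD
  refine (finite_setOf_isInteger_smul_and_isInteger_inv_smul (smul_ne_zero hD0 hy)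
    (smul_ne_zero hD0 hx)).subset ?_
  rintro t ⟨g, hg, hxy⟩
  refine isInteger_smul_and_isInteger_inv_smul_of_vecMul_eq (x := D • x) (y := D • y)
    (fun k => hDint (.inl k)) (fun k => hDint (.inr k)) hg ?_
  rw [smul_vecMul, hxy, smul_comm]

lemma Matrix.ext_of_vecMul_eq_of_span_eq_top {R ι m n : Type*} [CommSemiring R] [Fintype m]
    {v : ι → m → R} (hv : Submodule.span R (Set.range v) = ⊤) {A B : Matrix m n R}
    (h : ∀ i, v i ᵥ* A = v i ᵥ* B) : A = B :=
  vecMul_injective <| congrArg DFunLike.coe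
    (LinearMap.ext_on_range hv h : A.vecMulLinear = B.vecMulLinear)

/-- if the nonzero vectors `v i` span `ℚⁿ`, then the group of all
`g ∈ GL(n,ℤ)` permuting the set of lines `{ℚ·v i}` (acting on row vectors on the right)
is finite. -/
theorem stmt16 (n m : ℕ) (v : Fin m → (Fin (n + 1) → ℚ)) (hv : ∀ i, v i ≠ 0)
    (hspan : Submodule.span ℚ (Set.range v) = ⊤) :
    {g : Matrix (Fin (n + 1)) (Fin (n + 1)) ℤ |
      (g.det = 1 ∨ g.det = -1) ∧
      ∀ i, ∃ j, ∃ lam : ℚ,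
        Matrix.vecMul (v i) (g.map (Int.cast : ℤ → ℚ)) = lam • v j}.Finite := by
  have hinj : Function.Injective fun (g : Matrix (Fin (n + 1)) (Fin (n + 1)) ℤ) i =>
      v i ᵥ* g.map (Int.cast : ℤ → ℚ) := fun g g' h =>
    Matrix.map_injective Int.cast_injective (ext_of_vecMul_eq_of_span_eq_top hspan (congrFun h))
  refine Set.Finite.of_finite_image ?_ hinj.injOn
  refine (Set.Finite.pi' fun i => Set.finite_iUnion fun j =>
    (finite_setOf_exists_vecMul_map_intCast_eq_smul (hv i) (hv j)).image (· • v j)).subset ?_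
  rintro _ ⟨g, ⟨hdet, hg⟩, rfl⟩ i
  obtain ⟨j, t, ht⟩ := hg i
  exact Set.mem_iUnion.2 ⟨j, t, ⟨g, Int.isUnit_iff.2 hdet, ht⟩, ht.symm⟩
end
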